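/- arXiv:1703.10678 — 6 statements merged into one kernel-verified Lean document; each statement's English description precedes it below -/
import Mathlib

section
/- Square Configuration: Let a,…,g be seven distinct empty nodes with groups ab, aed, bfc, cgd (each group listing exactly its markers, groups pairwise sharing at most one node). Then the coverage set {a → b {(c,g),(d,e)}, b → a {(c,f),(d,g)}, c → a {(b,f),(d,g)}, d → b {(a,e),(c,g)}, e → a {(b,c),(d,g)}, f → b {(a,e),(c,d)}, g → a {(b,f),(c,d)}} is a valid matching set: for every first move on a marker, the reply together with the listed pairs covers all four groups by disjoint pairs of distinct remaining markers each contained in its group. -/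
/-- A valid covering `x → y L` for a configuration with marker set `N` and group set
`G`: the reply `y` is a marker different from the first move `x`; every group not
containing the reply is assigned (via the association list `L` of entries
`(group, u, v)`) a pair of two distinct remaining markers contained in that group;
and all assigned pairs are pairwise disjoint and avoid the two played nodes. -/
def ValidCoveringList {X : Type*} (N : Set X) (G : Set (Set X)) (x y : X)
    (L : List (Set X × X × X)) : Prop :=
  x ∈ N ∧ y ∈ N ∧ y ≠ x ∧
  (∀ g ∈ G, y ∉ g → ∃ p ∈ L, p.1 = g) ∧
  (∀ p ∈ L, p.1 ∈ G ∧ y ∉ p.1 ∧ p.2.1 ∈ p.1 ∧ p.2.2 ∈ p.1 ∧ p.2.1 ≠ p.2.2 ∧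
    p.2.1 ∈ N ∧ p.2.2 ∈ N ∧ p.2.1 ≠ x ∧ p.2.1 ≠ y ∧ p.2.2 ≠ x ∧ p.2.2 ≠ y) ∧
  L.Pairwise (fun p q => Disjoint ({p.2.1, p.2.2} : Set X) ({q.2.1, q.2.2} : Set X))

lemma vcl_two {X : Type*} {N : Set X} {G : Set (Set X)} {x y : X}
    {s1 s2 : Set X} {u1 v1 u2 v2 : X}
    (hx : x ∈ N) (hy : y ∈ N) (hyx : y ≠ x)
    (hcov : ∀ s ∈ G, y ∉ s → s = s1 ∨ s = s2)
    (hs1 : s1 ∈ G) (hys1 : y ∉ s1) (hu1 : u1 ∈ s1) (hv1 : v1 ∈ s1) (huv1 : u1 ≠ v1)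
    (hu1N : u1 ∈ N) (hv1N : v1 ∈ N)
    (hu1x : u1 ≠ x) (hu1y : u1 ≠ y) (hv1x : v1 ≠ x) (hv1y : v1 ≠ y)
    (hs2 : s2 ∈ G) (hys2 : y ∉ s2) (hu2 : u2 ∈ s2) (hv2 : v2 ∈ s2) (huv2 : u2 ≠ v2)
    (hu2N : u2 ∈ N) (hv2N : v2 ∈ N)
    (hu2x : u2 ≠ x) (hu2y : u2 ≠ y) (hv2x : v2 ≠ x) (hv2y : v2 ≠ y)
    (hd : Disjoint ({u1, v1} : Set X) ({u2, v2} : Set X)) :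
    ValidCoveringList N G x y [(s1, u1, v1), (s2, u2, v2)] := by
  refine ⟨hx, hy, hyx, ?_, ?_, ?_⟩
  · intro s hs hys
    rcases hcov s hs hys with rfl | rfl
    · exact ⟨(s, u1, v1), by simp, rfl⟩
    · exact ⟨(s, u2, v2), by simp, rfl⟩
  · intro p hp
    simp only [List.mem_cons, List.mem_singleton, List.not_mem_nil, or_false] at hp
    rcases hp with rfl | rfl
    · exact ⟨hs1, hys1, hu1, hv1, huv1, hu1N, hv1N, hu1x, hu1y, hv1x, hv1y⟩
    · exact ⟨hs2, hys2, hu2, hv2, huv2, hu2N, hv2N, hu2x, hu2y, hv2x, hv2y⟩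
  · refine List.Pairwise.cons ?_ (List.pairwise_singleton _ _)
    intro q hq
    rcases List.mem_singleton.mp hq with rfl
    exact hd


/-- **Square Configuration.** Seven distinct empty markers `a, …, g` with the four
groups `ab = {a,b}`, `aed = {a,e,d}`, `bfc = {b,f,c}`, `cgd = {c,g,d}` (groups pairwise
sharing at most one node, by distinctness). The listed coverage set is a valid
matching set: for every first move on a marker, the reply together with the listed
pairs covers all four groups by disjoint pairs of distinct remaining markers, each
contained in its group. -/
theorem square_configuration {X : Type*} (a b c d e f g : X)
    (hdist : List.Pairwise (· ≠ ·) [a, b, c, d, e, f, g]) :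
    let N : Set X := {a, b, c, d, e, f, g}
    let G : Set (Set X) := {{a, b}, {a, e, d}, {b, f, c}, {c, g, d}}
    ValidCoveringList N G a b [({c, g, d}, c, g), ({a, e, d}, d, e)] ∧
    ValidCoveringList N G b a [({b, f, c}, c, f), ({c, g, d}, d, g)] ∧
    ValidCoveringList N G c a [({b, f, c}, b, f), ({c, g, d}, d, g)] ∧
    ValidCoveringList N G d b [({a, e, d}, a, e), ({c, g, d}, c, g)] ∧
    ValidCoveringList N G e a [({b, f, c}, b, c), ({c, g, d}, d, g)] ∧
    ValidCoveringList N G f b [({a, e, d}, a, e), ({c, g, d}, c, d)] ∧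
    ValidCoveringList N G g a [({b, f, c}, b, f), ({c, g, d}, c, d)] := by
  simp only [List.pairwise_cons, List.mem_cons, List.mem_singleton, List.not_mem_nil,
    List.Pairwise.nil, forall_eq_or_imp, forall_eq, false_implies, forall_const,
    and_true, implies_true] at hdist
  obtain ⟨⟨hab, hac, had, hae, haf, hag⟩, ⟨hbc, hbd, hbe, hbf, hbg⟩,
    ⟨hcd, hce, hcf, hcg⟩, ⟨hde, hdf, hdg⟩, ⟨hef, heg⟩, hfg⟩ := hdist
  intro N G
  have hG : ∀ s, s ∈ G ↔ s = {a,b} ∨ s = {a,e,d} ∨ s = {b,f,c} ∨ s = {c,g,d} := by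
    intro s; simp [G, Set.mem_insert_iff]
  have naed : ∀ z : X, z ≠ a → z ≠ e → z ≠ d → z ∉ ({a,e,d} : Set X) := by
    intro z h1 h2 h3; simp [h1, h2, h3]
  have nbfc : ∀ z : X, z ≠ b → z ≠ f → z ≠ c → z ∉ ({b,f,c} : Set X) := by
    intro z h1 h2 h3; simp [h1, h2, h3]
  have ncgd : ∀ z : X, z ≠ c → z ≠ g → z ≠ d → z ∉ ({c,g,d} : Set X) := by
    intro z h1 h2 h3; simp [h1, h2, h3]
  have disj2 : ∀ u v w z : X, u ≠ w → u ≠ z → v ≠ w → v ≠ z →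
      Disjoint ({u, v} : Set X) ({w, z} : Set X) := by
    intro u v w z h1 h2 h3 h4
    simp [Set.disjoint_left, h1, h2, h3, h4]
  refine ⟨?_, ?_, ?_, ?_, ?_, ?_, ?_⟩
  · refine vcl_two (by simp [N]) (by simp [N]) hab.symm ?_
      (by simp [G]) (ncgd b hbc hbg hbd) (by simp) (by simp) hcg
      (by simp [N]) (by simp [N]) hac.symm hbc.symm hag.symm hbg.symm
      (by simp [G]) (naed b hab.symm hbe hbd) (by simp) (by simp) hde
      (by simp [N]) (by simp [N]) had.symm hbd.symm hae.symm hbe.symm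
      (disj2 _ _ _ _ hcd hce hdg.symm heg.symm)
    intro s hs hys
    rcases (hG s).mp hs with rfl | rfl | rfl | rfl
    · exact absurd (by simp) hys
    · exact Or.inr rfl
    · exact absurd (by simp) hys
    · exact Or.inl rfl
  · refine vcl_two (by simp [N]) (by simp [N]) hab ?_
      (by simp [G]) (nbfc a hab haf hac) (by simp) (by simp) hcf
      (by simp [N]) (by simp [N]) hbc.symm hac.symm hbf.symm haf.symm
      (by simp [G]) (ncgd a hac hag had) (by simp) (by simp) hdg
      (by simp [N]) (by simp [N]) hbd.symm had.symm hbg.symm hag.symm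
      (disj2 _ _ _ _ hcd hcg hdf.symm hfg)
    intro s hs hys
    rcases (hG s).mp hs with rfl | rfl | rfl | rfl
    · exact absurd (by simp) hys
    · exact absurd (by simp) hys
    · exact Or.inl rfl
    · exact Or.inr rfl
  · refine vcl_two (by simp [N]) (by simp [N]) hac ?_
      (by simp [G]) (nbfc a hab haf hac) (by simp) (by simp) hbf
      (by simp [N]) (by simp [N]) hbc hab.symm hcf.symm haf.symm
      (by simp [G]) (ncgd a hac hag had) (by simp) (by simp) hdg
      (by simp [N]) (by simp [N]) hcd.symm had.symm hcg.symm hag.symm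
      (disj2 _ _ _ _ hbd hbg hdf.symm hfg)
    intro s hs hys
    rcases (hG s).mp hs with rfl | rfl | rfl | rfl
    · exact absurd (by simp) hys
    · exact absurd (by simp) hys
    · exact Or.inl rfl
    · exact Or.inr rfl
  · refine vcl_two (by simp [N]) (by simp [N]) hbd ?_
      (by simp [G]) (naed b hab.symm hbe hbd) (by simp) (by simp) hae
      (by simp [N]) (by simp [N]) had hab hde.symm hbe.symm
      (by simp [G]) (ncgd b hbc hbg hbd) (by simp) (by simp) hcg
      (by simp [N]) (by simp [N]) hcd hbc.symm hdg.symm hbg.symm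
      (disj2 _ _ _ _ hac hag hce.symm heg)
    intro s hs hys
    rcases (hG s).mp hs with rfl | rfl | rfl | rfl
    · exact absurd (by simp) hys
    · exact Or.inl rfl
    · exact absurd (by simp) hys
    · exact Or.inr rfl
  · refine vcl_two (by simp [N]) (by simp [N]) hae ?_
      (by simp [G]) (nbfc a hab haf hac) (by simp) (by simp) hbc
      (by simp [N]) (by simp [N]) hbe hab.symm hce hac.symm
      (by simp [G]) (ncgd a hac hag had) (by simp) (by simp) hdg
      (by simp [N]) (by simp [N]) hde had.symm heg.symm hag.symm
      (disj2 _ _ _ _ hbd hbg hcd hcg)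
    intro s hs hys
    rcases (hG s).mp hs with rfl | rfl | rfl | rfl
    · exact absurd (by simp) hys
    · exact absurd (by simp) hys
    · exact Or.inl rfl
    · exact Or.inr rfl
  · refine vcl_two (by simp [N]) (by simp [N]) hbf ?_
      (by simp [G]) (naed b hab.symm hbe hbd) (by simp) (by simp) hae
      (by simp [N]) (by simp [N]) haf hab hef hbe.symm
      (by simp [G]) (ncgd b hbc hbg hbd) (by simp) (by simp) hcd
      (by simp [N]) (by simp [N]) hcf hbc.symm hdf hbd.symm
      (disj2 _ _ _ _ hac had hce.symm hde.symm)
    intro s hs hys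
    rcases (hG s).mp hs with rfl | rfl | rfl | rfl
    · exact absurd (by simp) hys
    · exact Or.inl rfl
    · exact absurd (by simp) hys
    · exact Or.inr rfl
  · refine vcl_two (by simp [N]) (by simp [N]) hag ?_
      (by simp [G]) (nbfc a hab haf hac) (by simp) (by simp) hbf
      (by simp [N]) (by simp [N]) hbg hab.symm hfg haf.symm
      (by simp [G]) (ncgd a hac hag had) (by simp) (by simp) hcd
      (by simp [N]) (by simp [N]) hcg hac.symm hdg had.symm
      (disj2 _ _ _ _ hbc hbd hcf.symm hdf.symm)
    intro s hs hys
    rcases (hG s).mp hs with rfl | rfl | rfl | rfl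
    · exact absurd (by simp) hys
    · exact absurd (by simp) hys
    · exact Or.inl rfl
    · exact Or.inr rfl
end

section
/- For every n ≥ 3 there exists a matching set for a cycle configuration C_n consisting of 2n−1 markers covering n pairwise non-overlapping groups: n corner markers v_1,…,v_n, the group {v_1, v_2}, and for each i with 2 ≤ i ≤ n the group {v_i, e_i, v_{i+1}} (indices mod n) with an extra edge marker e_i. That is, for every first-player move on a marker there is a second-player reply such that every group not containing the reply can be assigned a disjoint pair of two distinct remaining markers contained in it, all assigned pairs pairwise disjoint. -/
open Fin.NatCast

section

variable {X : Type*}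

theorem validCoveringList_map_range {N : Set X} {G : Set (Set X)} {x y : X} (k : ℕ)
    (g : ℕ → Set X) (c d : ℕ → X) (hx : x ∈ N) (hy : y ∈ N) (hyx : y ≠ x)
    (hcover : ∀ h ∈ G, y ∉ h → ∃ t < k, g t = h)
    (hg : ∀ t < k, g t ∈ G ∧ y ∉ g t ∧ g t ⊆ N)
    (hcd : ∀ t < k, c t ∈ g t ∧ d t ∈ g t ∧ c t ≠ d t ∧ c t ≠ x ∧ d t ≠ x)
    (hdisj : ∀ t t', t < t' → t' < k → Disjoint ({c t, d t} : Set X) {c t', d t'}) :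
    ValidCoveringList N G x y ((List.range k).map fun t => (g t, c t, d t)) := by
  refine ⟨hx, hy, hyx, ?_, ?_, ?_⟩
  · intro h hG hyh
    obtain ⟨t, ht, rfl⟩ := hcover h hG hyh
    exact ⟨_, List.mem_map_of_mem (List.mem_range.2 ht), rfl⟩
  · simp only [List.mem_map, List.mem_range]
    rintro _ ⟨t, ht, rfl⟩
    obtain ⟨hgG, hyg, hgN⟩ := hg t ht
    obtain ⟨hc, hd, hcd, hcx, hdx⟩ := hcd t ht
    exact ⟨hgG, hyg, hc, hd, hcd, hgN hc, hgN hd, hcx, ne_of_mem_of_not_mem hc hyg, hdx,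
      ne_of_mem_of_not_mem hd hyg⟩
  · rw [List.pairwise_map]
    exact List.pairwise_lt_range.imp_of_mem fun ht ht' hlt =>
      hdisj _ _ hlt (List.mem_range.1 ht')

def Nat.succAbove (r q : ℕ) : ℕ := if q < r then q else q + 1

namespace Nat

theorem succAbove_ne (r q : ℕ) : succAbove r q ≠ r := by unfold succAbove; split_ifs <;> omega

theorem succAbove_le (r q : ℕ) : succAbove r q ≤ q + 1 := by
  unfold succAbove; split_ifs <;> omega

theorem succAbove_eq_or (r q : ℕ) : succAbove r q = q ∨ succAbove r q = q + 1 := by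
  unfold succAbove; split_ifs <;> omega

theorem strictMono_succAbove (r : ℕ) : StrictMono (succAbove r) := by
  intro q q' h; unfold succAbove; split_ifs <;> omega

end Nat

def pathGroup (p : ℕ → X) (t : ℕ) : Set X := {p (2 * t), p (2 * t + 1), p (2 * t + 2)}

theorem exists_pairs_pathGroup (p : ℕ → X) (k : ℕ) (hp : Set.InjOn p (Set.Iic (2 * k)))
    (x : X) : ∃ c d : ℕ → X,
      (∀ t < k, c t ∈ pathGroup p t ∧ d t ∈ pathGroup p t ∧ c t ≠ d t ∧
        c t ≠ x ∧ d t ≠ x) ∧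
      ∀ t t', t < t' → t' < k → Disjoint ({c t, d t} : Set X) {c t', d t'} := by
  obtain ⟨r, hr⟩ : ∃ r, ∀ q ≤ 2 * k, q ≠ r → p q ≠ x := by
    by_cases hx : ∃ r ≤ 2 * k, p r = x
    · obtain ⟨r, hr, rfl⟩ := hx
      exact ⟨r, fun q hq hqr => hp.ne hq hr hqr⟩
    · push Not at hx
      exact ⟨0, fun q hq _ => hx q hq⟩
  have hsucc : ∀ q < 2 * k, Nat.succAbove r q ≤ 2 * k := fun q hq =>
    (Nat.succAbove_le r q).trans hq
  have hne : ∀ q q', q < q' → q' < 2 * k → p (Nat.succAbove r q) ≠ p (Nat.succAbove r q') :=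
    fun q q' h h' => hp.ne (hsucc q (h.trans h')) (hsucc q' h') (Nat.strictMono_succAbove r h).ne
  refine ⟨fun t => p (Nat.succAbove r (2 * t)), fun t => p (Nat.succAbove r (2 * t + 1)),
    ?_, ?_⟩
  · intro t ht
    refine ⟨?_, ?_, hne _ _ (by omega) (by omega),
      hr _ (hsucc _ (by omega)) (Nat.succAbove_ne _ _),
      hr _ (hsucc _ (by omega)) (Nat.succAbove_ne _ _)⟩
    · rcases Nat.succAbove_eq_or r (2 * t) with h | h <;> simp [pathGroup, h]
    · rcases Nat.succAbove_eq_or r (2 * t + 1) with h | h <;> simp [pathGroup, h]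
  · intro t t' h h'
    simp only [Set.disjoint_insert_left, Set.disjoint_singleton_left, Set.mem_insert_iff,
      Set.mem_singleton_iff, not_or]
    exact ⟨⟨hne _ _ (by omega) (by omega), hne _ _ (by omega) (by omega)⟩,
      hne _ _ (by omega) (by omega), hne _ _ (by omega) (by omega)⟩

theorem Fin.eq_of_natCast_eq {n j k : ℕ} [NeZero n] (h : (j : Fin n) = k) (hjk : j < k + n)
    (hkj : k < j + n) : j = k :=
  Nat.ModEq.eq_of_abs_lt (show j % n = k % n by simpa [Fin.ext_iff] using h)
    (abs_sub_lt_iff.2 ⟨by omega, by omega⟩)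

theorem Fin.natCast_ne_zero_of_lt {n j : ℕ} [NeZero n] (h0 : 0 < j) (hj : j < n) :
    (j : Fin n) ≠ 0 := by
  simpa using Nat.not_dvd_of_pos_of_lt h0 hj

section Cycle

variable {n : ℕ} [NeZero n]

def cycleMarkers (v e : Fin n → X) : Set X := Set.range v ∪ e '' {i | i ≠ 0}

def cycleGroups (v e : Fin n → X) : Set (Set X) :=
  {({v 0, v 1} : Set X)} ∪ (fun i => ({v i, e i, v (i + 1)} : Set X)) '' {i | i ≠ 0}

def cyclePath (v e : Fin n → X) (a q : ℕ) : X :=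
  if q % 2 = 0 then v ↑(a + q / 2) else e ↑(a + q / 2)

variable {v e : Fin n → X}

theorem cyclePath_two_mul (a t : ℕ) : cyclePath v e a (2 * t) = v ↑(a + t) := by
  simp [cyclePath]

theorem cyclePath_two_mul_add_one (a t : ℕ) : cyclePath v e a (2 * t + 1) = e ↑(a + t) := by
  simp [cyclePath, show (2 * t + 1) / 2 = t by omega]

theorem pathGroup_cyclePath (a t : ℕ) :
    pathGroup (cyclePath v e a) t = {v ↑(a + t), e ↑(a + t), v (↑(a + t) + 1)} := by
  simp only [pathGroup, cyclePath_two_mul, cyclePath_two_mul_add_one,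
    show 2 * t + 2 = 2 * (t + 1) by ring, ← add_assoc, Nat.cast_succ]

theorem cyclePath_injOn (hv : Function.Injective v)
    (he : ∀ i j : Fin n, i ≠ 0 → j ≠ 0 → e i = e j → i = j)
    (hve : ∀ i j : Fin n, j ≠ 0 → v i ≠ e j) {b : ℕ} (hb : b ≤ 1) :
    Set.InjOn (cyclePath v e (b + 1)) (Set.Iic (2 * (n - 2))) := by
  intro q (hq : q ≤ 2 * (n - 2)) q' (hq' : q' ≤ 2 * (n - 2)) h
  obtain ⟨t, rfl | rfl⟩ := Nat.even_or_odd' q <;>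
    obtain ⟨t', rfl | rfl⟩ := Nat.even_or_odd' q' <;>
    simp only [cyclePath_two_mul, cyclePath_two_mul_add_one] at h
  · replace h := hv h
    have := Fin.eq_of_natCast_eq h (by omega) (by omega)
    omega
  · refine absurd h (hve _ _ (Fin.natCast_ne_zero_of_lt ?_ ?_)) <;> omega
  · refine absurd h.symm (hve _ _ (Fin.natCast_ne_zero_of_lt ?_ ?_)) <;> omega
  · have := Fin.eq_of_natCast_eq (he _ _ (Fin.natCast_ne_zero_of_lt (by omega) (by omega))
      (Fin.natCast_ne_zero_of_lt (by omega) (by omega)) h) (by omega) (by omega)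
    omega

theorem pathGroup_cyclePath_mem (hv : Function.Injective v)
    (hve : ∀ i j : Fin n, j ≠ 0 → v i ≠ e j) {b t : ℕ} (hb : b ≤ 1) (ht : t < n - 2) :
    pathGroup (cyclePath v e (b + 1)) t ∈ cycleGroups v e ∧
      v b ∉ pathGroup (cyclePath v e (b + 1)) t ∧
      pathGroup (cyclePath v e (b + 1)) t ⊆ cycleMarkers v e := by
  have hi : ((b + 1 + t : ℕ) : Fin n) ≠ 0 := Fin.natCast_ne_zero_of_lt (by omega) (by omega)
  rw [pathGroup_cyclePath]
  refine ⟨Or.inr ⟨_, hi, rfl⟩, ?_, ?_⟩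
  · simp only [Set.mem_insert_iff, Set.mem_singleton_iff, not_or, ← Nat.cast_succ]
    refine ⟨fun h => ?_, hve _ _ hi, fun h => ?_⟩
    · have := Fin.eq_of_natCast_eq (hv h) (by omega) (by omega)
      omega
    · have := Fin.eq_of_natCast_eq (hv h) (by omega) (by omega)
      omega
  · rintro _ (rfl | rfl | rfl)
    exacts [Or.inl ⟨_, rfl⟩, Or.inr ⟨_, hi, rfl⟩, Or.inl ⟨_, rfl⟩]

theorem exists_pathGroup_cyclePath_eq {b : ℕ} (hb : b ≤ 1) {g : Set X}
    (hg : g ∈ cycleGroups v e) (hbg : v b ∉ g) :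
    ∃ t < n - 2, pathGroup (cyclePath v e (b + 1)) t = g := by
  rcases hg with rfl | ⟨i, hi0, rfl⟩
  · interval_cases b <;> simp at hbg
  simp only [Set.mem_insert_iff, Set.mem_singleton_iff, not_or] at hbg
  have hib : i.val ≠ b := fun h => hbg.1 (by rw [← h, Fin.cast_val_eq_self])
  have hib' : i.val + 1 ≠ b + n := fun h => hbg.2.2 (by
    rw [← Fin.cast_val_eq_self i, ← Nat.cast_add_one, h, Nat.cast_add, Fin.natCast_self,
      add_zero])
  have hi0' : i.val ≠ 0 := fun h => hi0 (Fin.ext h)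
  refine ⟨i.val - (b + 1), by omega, ?_⟩
  rw [pathGroup_cyclePath, Nat.add_sub_cancel' (by omega), Fin.cast_val_eq_self]

theorem exists_validCoveringList_cycle (hv : Function.Injective v)
    (he : ∀ i j : Fin n, i ≠ 0 → j ≠ 0 → e i = e j → i = j)
    (hve : ∀ i j : Fin n, j ≠ 0 → v i ≠ e j) {b : ℕ} (hb : b ≤ 1) {x : X}
    (hx : x ∈ cycleMarkers v e) (hxb : x ≠ v b) :
    ∃ L, ValidCoveringList (cycleMarkers v e) (cycleGroups v e) x (v b) L := by
  obtain ⟨c, d, hcd, hdisj⟩ := exists_pairs_pathGroup _ (n - 2) (cyclePath_injOn hv he hve hb) x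
  exact ⟨_, validCoveringList_map_range (n - 2) _ c d hx (Or.inl ⟨_, rfl⟩) hxb.symm
    (fun g hg hbg => exists_pathGroup_cyclePath_eq hb hg hbg)
    (fun t ht => pathGroup_cyclePath_mem hv hve hb ht) hcd hdisj⟩

end Cycle

end

/-- **Cycle Configuration `C_n`.** For every `n ≥ 3` and every cycle configuration of
`2n − 1` distinct markers (corner markers `v i` and edge markers `e i` for `i ≠ 0`)
with the `n` pairwise non-overlapping groups `{v 0, v 1}` and `{v i, e i, v (i+1)}`
for `i ≠ 0` (indices mod `n`), there is a matching set: for every first-player move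
on a marker there is a second-player reply admitting a valid covering. -/
theorem cycle_configuration {X : Type*} (n : ℕ) [NeZero n] (hn : 3 ≤ n) (v e : Fin n → X)
    (hv : Function.Injective v)
    (he : ∀ i j : Fin n, i ≠ 0 → j ≠ 0 → e i = e j → i = j)
    (hve : ∀ i j : Fin n, j ≠ 0 → v i ≠ e j) :
    ∀ x ∈ (Set.range v ∪ e '' {i | i ≠ 0} : Set X),
      ∃ (y : X) (L : List (Set X × X × X)),
        ValidCoveringList (Set.range v ∪ e '' {i | i ≠ 0})
          ({({v 0, v 1} : Set X)} ∪ (fun i => ({v i, e i, v (i + 1)} : Set X)) '' {i | i ≠ 0})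
          x y L := by
  intro x hx
  by_cases hx1 : x = v 1
  · have h10 : (1 : Fin n) ≠ 0 := by
      simp [Fin.ext_iff, Nat.mod_eq_of_lt (by omega : 1 < n)]
    have hx0 : x ≠ v ↑(0 : ℕ) := by simpa [hx1] using hv.ne h10
    exact ⟨v 0, exists_validCoveringList_cycle hv he hve zero_le_one hx hx0⟩
  · have hx1' : x ≠ v ↑(1 : ℕ) := by simpa using hx1
    exact ⟨v 1, exists_validCoveringList_cycle hv he hve le_rfl hx hx1'⟩
end

section
/- BiTriangle Configuration: For eight distinct nodes a,…,h and five groups ab = {a,b}, adc = {a,d,c}, agf = {a,g,f}, bec = {b,e,c}, bhf = {b,h,f}, there exists a valid matching set using only these eight markers; in particular a → b {(c,d),(f,g)}, c → a {(b,e),(f,h)}, d → a {(b,c),(f,h)}, and symmetric coverings for b, e, f, g, h, cover all five groups. -/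
/-- **BiTriangle Configuration.** Eight distinct markers `a, …, h` with the five groups
`ab = {a,b}`, `adc = {a,d,c}`, `agf = {a,g,f}`, `bec = {b,e,c}`, `bhf = {b,h,f}` admit
a valid matching set using only these eight markers; in particular the coverings
`a → b {(c,d),(f,g)}`, `c → a {(b,e),(f,h)}`, `d → a {(b,c),(f,h)}` and symmetric
coverings for `b, e, f, g, h` cover all five groups. -/
theorem biTriangle_configuration {X : Type*} (a b c d e f g h : X)
    (hdist : List.Pairwise (· ≠ ·) [a, b, c, d, e, f, g, h]) :
    let N : Set X := {a, b, c, d, e, f, g, h}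
    let G : Set (Set X) := {{a, b}, {a, d, c}, {a, g, f}, {b, e, c}, {b, h, f}}
    ValidCoveringList N G a b [({a, d, c}, c, d), ({a, g, f}, f, g)] ∧
    ValidCoveringList N G c a [({b, e, c}, b, e), ({b, h, f}, f, h)] ∧
    ValidCoveringList N G d a [({b, e, c}, b, c), ({b, h, f}, f, h)] ∧
    (∀ x ∈ ({b, e, f, g, h} : Set X), ∃ (y : X) (L : List (Set X × X × X)),
      ValidCoveringList N G x y L) := by
  simp only [List.pairwise_cons, List.mem_cons, List.mem_singleton,
    List.not_mem_nil, List.Pairwise.nil, forall_eq_or_imp, forall_eq] at hdist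
  obtain ⟨⟨hab, hac, had, hae, haf, hag, hah, -⟩, ⟨hbc, hbd, hbe, hbf, hbg, hbh, -⟩,
    ⟨hcd, hce, hcf, hcg, hch, -⟩, ⟨hde, hdf, hdg, hdh, -⟩, ⟨hef, heg, heh, -⟩,
    ⟨hfg, hfh, -⟩, ⟨hgh, -⟩, -⟩ := hdist
  have hba : b ≠ a := hab.symm
  have hca : c ≠ a := hac.symm
  have hda : d ≠ a := had.symm
  have hea : e ≠ a := hae.symm
  have hfa : f ≠ a := haf.symm
  have hga : g ≠ a := hag.symm
  have hha : h ≠ a := hah.symm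
  have hcb : c ≠ b := hbc.symm
  have hdb : d ≠ b := hbd.symm
  have heb : e ≠ b := hbe.symm
  have hfb : f ≠ b := hbf.symm
  have hgb : g ≠ b := hbg.symm
  have hhb : h ≠ b := hbh.symm
  have hdc : d ≠ c := hcd.symm
  have hec : e ≠ c := hce.symm
  have hfc : f ≠ c := hcf.symm
  have hgc : g ≠ c := hcg.symm
  have hhc : h ≠ c := hch.symm
  have hed : e ≠ d := hde.symm
  have hfd : f ≠ d := hdf.symm
  have hgd : g ≠ d := hdg.symm
  have hhd : h ≠ d := hdh.symm
  have hfe : f ≠ e := hef.symm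
  have hge : g ≠ e := heg.symm
  have hhe : h ≠ e := heh.symm
  have hgf : g ≠ f := hfg.symm
  have hhf : h ≠ f := hfh.symm
  have hhg : h ≠ g := hgh.symm
  intro N G
  have Hb : ∃ (y : X) (L : List (Set X × X × X)), ValidCoveringList N G b y L :=
    ⟨a, [({b, e, c}, c, e), ({b, h, f}, f, h)], by
      simp [ValidCoveringList, N, G, Set.disjoint_left, *]⟩
  have He : ∃ (y : X) (L : List (Set X × X × X)), ValidCoveringList N G e y L :=
    ⟨b, [({a, d, c}, c, d), ({a, g, f}, f, g)], by
      simp [ValidCoveringList, N, G, Set.disjoint_left, *]⟩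
  have Hf : ∃ (y : X) (L : List (Set X × X × X)), ValidCoveringList N G f y L :=
    ⟨b, [({a, d, c}, c, d), ({a, g, f}, a, g)], by
      simp [ValidCoveringList, N, G, Set.disjoint_left, *]⟩
  have Hg : ∃ (y : X) (L : List (Set X × X × X)), ValidCoveringList N G g y L :=
    ⟨a, [({b, e, c}, b, e), ({b, h, f}, f, h)], by
      simp [ValidCoveringList, N, G, Set.disjoint_left, *]⟩
  have Hh : ∃ (y : X) (L : List (Set X × X × X)), ValidCoveringList N G h y L :=
    ⟨a, [({b, e, c}, c, e), ({b, h, f}, b, f)], by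
      simp [ValidCoveringList, N, G, Set.disjoint_left, *]⟩
  refine ⟨?_, ?_, ?_, ?_⟩
  · simp [ValidCoveringList, N, G, Set.disjoint_left, *]
  · simp [ValidCoveringList, N, G, Set.disjoint_left, *]
  · simp [ValidCoveringList, N, G, Set.disjoint_left, *]
  · intro x hx
    simp only [Set.mem_insert_iff, Set.mem_singleton_iff] at hx
    rcases hx with rfl | rfl | rfl | rfl | rfl
    exacts [Hb, He, Hf, Hg, Hh]
end

section
/- FlatStar Configuration: For eight distinct nodes a,…,h and six groups abc = {a,b,c}, adg = {a,d,g}, bdf = {b,d,f}, beh = {b,e,h}, ceg = {c,e,g}, fgh = {f,g,h}, the coverage set a → b {(c,e),(d,g),(f,h)}; b → g {(a,c),(d,f),(e,h)}; d → b {(a,g),(c,e),(f,h)}, extended symmetrically for first moves c, e, f, g, h (always replying b or g), is a valid matching set covering six groups with eight markers. -/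
set_option maxHeartbeats 2000000 in
/-- **FlatStar Configuration.** Eight distinct markers `a, …, h` with the six groups
`abc = {a,b,c}`, `adg = {a,d,g}`, `bdf = {b,d,f}`, `beh = {b,e,h}`, `ceg = {c,e,g}`,
`fgh = {f,g,h}`. The coverage set `a → b {(c,e),(d,g),(f,h)}`,
`b → g {(a,c),(d,f),(e,h)}`, `d → b {(a,g),(c,e),(f,h)}`, extended symmetrically for
first moves `c, e, f, g, h` (always replying `b` or `g`), is a valid matching set
covering six groups with eight markers. -/
theorem flatStar_configuration {X : Type*} (a b c d e f g h : X)
    (hdist : List.Pairwise (· ≠ ·) [a, b, c, d, e, f, g, h]) :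
    let N : Set X := {a, b, c, d, e, f, g, h}
    let G : Set (Set X) :=
      {{a, b, c}, {a, d, g}, {b, d, f}, {b, e, h}, {c, e, g}, {f, g, h}}
    ValidCoveringList N G a b
      [({c, e, g}, c, e), ({a, d, g}, d, g), ({f, g, h}, f, h)] ∧
    ValidCoveringList N G b g
      [({a, b, c}, a, c), ({b, d, f}, d, f), ({b, e, h}, e, h)] ∧
    ValidCoveringList N G d b
      [({a, d, g}, a, g), ({c, e, g}, c, e), ({f, g, h}, f, h)] ∧
    (∀ x ∈ ({c, e, f, g, h} : Set X), ∃ y ∈ ({b, g} : Set X),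
      ∃ L : List (Set X × X × X), ValidCoveringList N G x y L) := by
  
  simp only [List.pairwise_cons, List.mem_cons, List.not_mem_nil, or_false,
    List.mem_singleton, List.Pairwise.nil, and_true, forall_eq_or_imp, forall_eq] at hdist
  obtain ⟨⟨hab,hac,had,hae,haf,hag,hah⟩,⟨hbc,hbd,hbe,hbf,hbg,hbh⟩,
    ⟨hcd,hce,hcf,hcg,hch⟩,⟨hde,hdf,hdg,hdh⟩,⟨hef,heg,heh⟩,⟨hfg,hfh⟩,hgh,_⟩ := hdist
  intro N G
  have h1 : ValidCoveringList N G a b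
      [({c, e, g}, c, e), ({a, d, g}, d, g), ({f, g, h}, f, h)] := by
    refine ⟨?_, ?_, ?_, ?_, ?_, ?_⟩ <;>
      simp_all [ValidCoveringList, N, G, Set.disjoint_left, Ne.symm]
  have h2 : ValidCoveringList N G b g
      [({a, b, c}, a, c), ({b, d, f}, d, f), ({b, e, h}, e, h)] := by
    clear h1
    refine ⟨?_, ?_, ?_, ?_, ?_, ?_⟩ <;>
      simp_all [ValidCoveringList, N, G, Set.disjoint_left, Ne.symm]
  have h3 : ValidCoveringList N G d b
      [({a, d, g}, a, g), ({c, e, g}, c, e), ({f, g, h}, f, h)] := by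
    clear h1 h2
    refine ⟨?_, ?_, ?_, ?_, ?_, ?_⟩ <;>
      simp_all [ValidCoveringList, N, G, Set.disjoint_left, Ne.symm]
  have h4 : ValidCoveringList N G c g
      [({a,b,c},a,b),({b,d,f},d,f),({b,e,h},e,h)] := by
    clear h1 h2 h3
    refine ⟨?_, ?_, ?_, ?_, ?_, ?_⟩ <;>
      simp_all [ValidCoveringList, N, G, Set.disjoint_left, Ne.symm]
  have h5 : ValidCoveringList N G e g
      [({a,b,c},a,c),({b,d,f},d,f),({b,e,h},b,h)] := by
    clear h1 h2 h3 h4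
    refine ⟨?_, ?_, ?_, ?_, ?_, ?_⟩ <;>
      simp_all [ValidCoveringList, N, G, Set.disjoint_left, Ne.symm]
  have h6 : ValidCoveringList N G f b
      [({a,d,g},a,d),({c,e,g},c,e),({f,g,h},g,h)] := by
    clear h1 h2 h3 h4 h5
    refine ⟨?_, ?_, ?_, ?_, ?_, ?_⟩ <;>
      simp_all [ValidCoveringList, N, G, Set.disjoint_left, Ne.symm]
  have h7 : ValidCoveringList N G g b
      [({a,d,g},a,d),({c,e,g},c,e),({f,g,h},f,h)] := by
    clear h1 h2 h3 h4 h5 h6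
    refine ⟨?_, ?_, ?_, ?_, ?_, ?_⟩ <;>
      simp_all [ValidCoveringList, N, G, Set.disjoint_left, Ne.symm]
  have h8 : ValidCoveringList N G h b
      [({a,d,g},a,d),({c,e,g},c,e),({f,g,h},f,g)] := by
    clear h1 h2 h3 h4 h5 h6 h7
    refine ⟨?_, ?_, ?_, ?_, ?_, ?_⟩ <;>
      simp_all [ValidCoveringList, N, G, Set.disjoint_left, Ne.symm]
  refine ⟨h1, h2, h3, ?_⟩
  intro x hx
  rcases hx with hx | hx | hx | hx | hx <;> subst hx
  · exact ⟨g, by simp, _, h4⟩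
  · exact ⟨g, by simp, _, h5⟩
  · exact ⟨b, by simp, _, h6⟩
  · exact ⟨b, by simp, _, h7⟩
  · exact ⟨b, by simp, _, h8⟩
end

section
/- TriTriangleX Configuration: For ten distinct nodes a,…,j and seven groups ab = {a,b}, adc = {a,d,c}, aef = {a,e,f}, aih = {a,i,h}, bec = {b,e,c}, bgf = {b,g,f}, bjh = {b,j,h}, the coverage set a → b {(c,d),(e,f),(h,i)}; c → a {(b,e),(f,g),(h,j)}; d → a {(b,f),(c,e),(h,j)}; e → a {(b,c),(f,g),(h,j)}; h → a {(b,j),(c,e),(f,g)}; i → a {(b,c),(f,g),(h,j)}, extended symmetrically for b, f, g, j, is a valid matching set covering seven groups with ten markers. -/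
set_option maxHeartbeats 2000000 in
/-- **TriTriangleX Configuration.** Ten distinct markers `a, …, j` with the seven
groups `ab = {a,b}`, `adc = {a,d,c}`, `aef = {a,e,f}`, `aih = {a,i,h}`,
`bec = {b,e,c}`, `bgf = {b,g,f}`, `bjh = {b,j,h}`. The listed coverage set (for first
moves `a, c, d, e, h, i`), extended symmetrically for `b, f, g, j`, is a valid
matching set covering seven groups with ten markers. -/
theorem triTriangleX_configuration {X : Type*} (a b c d e f g h i j : X)
    (hdist : List.Pairwise (· ≠ ·) [a, b, c, d, e, f, g, h, i, j]) :
    let N : Set X := {a, b, c, d, e, f, g, h, i, j}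
    let G : Set (Set X) :=
      {{a, b}, {a, d, c}, {a, e, f}, {a, i, h}, {b, e, c}, {b, g, f}, {b, j, h}}
    ValidCoveringList N G a b
      [({a, d, c}, c, d), ({a, e, f}, e, f), ({a, i, h}, h, i)] ∧
    ValidCoveringList N G c a
      [({b, e, c}, b, e), ({b, g, f}, f, g), ({b, j, h}, h, j)] ∧
    ValidCoveringList N G d a
      [({b, g, f}, b, f), ({b, e, c}, c, e), ({b, j, h}, h, j)] ∧
    ValidCoveringList N G e a
      [({b, e, c}, b, c), ({b, g, f}, f, g), ({b, j, h}, h, j)] ∧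
    ValidCoveringList N G h a
      [({b, j, h}, b, j), ({b, e, c}, c, e), ({b, g, f}, f, g)] ∧
    ValidCoveringList N G i a
      [({b, e, c}, b, c), ({b, g, f}, f, g), ({b, j, h}, h, j)] ∧
    (∀ x ∈ ({b, f, g, j} : Set X), ∃ (y : X) (L : List (Set X × X × X)),
      ValidCoveringList N G x y L) := by
  intro N G
  simp only [List.pairwise_cons, List.mem_cons, List.not_mem_nil, or_false,
    List.mem_singleton, forall_eq_or_imp, forall_eq, List.Pairwise.nil, and_true,
    IsEmpty.forall_iff] at hdist
  obtain ⟨⟨hab,hac,had,hae,haf,hag,hah,hai,haj⟩,⟨hbc,hbd,hbe,hbf,hbg,hbh,hbi,hbj⟩,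
    ⟨hcd,hce,hcf,hcg,hch,hci,hcj⟩,⟨hde,hdf,hdg,hdh,hdi,hdj⟩,⟨hef,heg,heh,hei,hej⟩,
    ⟨hfg,hfh,hfi,hfj⟩,⟨hgh,hgi,hgj⟩,⟨hhi,hhj⟩,hij⟩ := hdist
  refine ⟨?_, ?_, ?_, ?_, ?_, ?_, ?_⟩
  · -- a → b
    refine ⟨by simp [N], by simp [N], hab.symm, ?_, ?_, ?_⟩
    · intro gr hg hy
      simp only [G, Set.mem_insert_iff, Set.mem_singleton_iff] at hg
      rcases hg with rfl|rfl|rfl|rfl|rfl|rfl|rfl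
      · simp at hy
      · exact ⟨(({a, d, c}, c, d) : Set X × X × X), by simp, rfl⟩
      · exact ⟨(({a, e, f}, e, f) : Set X × X × X), by simp, rfl⟩
      · exact ⟨(({a, i, h}, h, i) : Set X × X × X), by simp, rfl⟩
      · simp at hy
      · simp at hy
      · simp at hy
    · intro p hp
      fin_cases hp <;> simp_all [N, G, eq_comm]
    · simp only [List.pairwise_cons, List.mem_cons, List.not_mem_nil, or_false,
        List.mem_singleton, forall_eq_or_imp, forall_eq, List.Pairwise.nil, and_true,
        IsEmpty.forall_iff, Set.disjoint_iff_forall_ne, Set.mem_insert_iff,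
        Set.mem_singleton_iff]
      refine ⟨⟨?_, ?_⟩, ?_, fun _ => trivial⟩ <;> simp_all [eq_comm]
  · -- c → a
    refine ⟨by simp [N], by simp [N], hac, ?_, ?_, ?_⟩
    · intro gr hg hy
      simp only [G, Set.mem_insert_iff, Set.mem_singleton_iff] at hg
      rcases hg with rfl|rfl|rfl|rfl|rfl|rfl|rfl
      · simp at hy
      · simp at hy
      · simp at hy
      · simp at hy
      · exact ⟨(({b, e, c}, b, e) : Set X × X × X), by simp, rfl⟩
      · exact ⟨(({b, g, f}, f, g) : Set X × X × X), by simp, rfl⟩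
      · exact ⟨(({b, j, h}, h, j) : Set X × X × X), by simp, rfl⟩
    · intro p hp
      fin_cases hp <;> simp_all [N, G, eq_comm]
    · simp only [List.pairwise_cons, List.mem_cons, List.not_mem_nil, or_false,
        List.mem_singleton, forall_eq_or_imp, forall_eq, List.Pairwise.nil, and_true,
        IsEmpty.forall_iff, Set.disjoint_iff_forall_ne, Set.mem_insert_iff,
        Set.mem_singleton_iff]
      refine ⟨⟨?_, ?_⟩, ?_, fun _ => trivial⟩ <;> simp_all [eq_comm]
  · -- d → a
    refine ⟨by simp [N], by simp [N], had, ?_, ?_, ?_⟩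
    · intro gr hg hy
      simp only [G, Set.mem_insert_iff, Set.mem_singleton_iff] at hg
      rcases hg with rfl|rfl|rfl|rfl|rfl|rfl|rfl
      · simp at hy
      · simp at hy
      · simp at hy
      · simp at hy
      · exact ⟨(({b, e, c}, c, e) : Set X × X × X), by simp, rfl⟩
      · exact ⟨(({b, g, f}, b, f) : Set X × X × X), by simp, rfl⟩
      · exact ⟨(({b, j, h}, h, j) : Set X × X × X), by simp, rfl⟩
    · intro p hp
      fin_cases hp <;> simp_all [N, G, eq_comm]
    · simp only [List.pairwise_cons, List.mem_cons, List.not_mem_nil, or_false,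
        List.mem_singleton, forall_eq_or_imp, forall_eq, List.Pairwise.nil, and_true,
        IsEmpty.forall_iff, Set.disjoint_iff_forall_ne, Set.mem_insert_iff,
        Set.mem_singleton_iff]
      refine ⟨⟨?_, ?_⟩, ?_, fun _ => trivial⟩ <;> simp_all [eq_comm]
  · -- e → a
    refine ⟨by simp [N], by simp [N], hae, ?_, ?_, ?_⟩
    · intro gr hg hy
      simp only [G, Set.mem_insert_iff, Set.mem_singleton_iff] at hg
      rcases hg with rfl|rfl|rfl|rfl|rfl|rfl|rfl
      · simp at hy
      · simp at hy
      · simp at hy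
      · simp at hy
      · exact ⟨(({b, e, c}, b, c) : Set X × X × X), by simp, rfl⟩
      · exact ⟨(({b, g, f}, f, g) : Set X × X × X), by simp, rfl⟩
      · exact ⟨(({b, j, h}, h, j) : Set X × X × X), by simp, rfl⟩
    · intro p hp
      fin_cases hp <;> simp_all [N, G, eq_comm]
    · simp only [List.pairwise_cons, List.mem_cons, List.not_mem_nil, or_false,
        List.mem_singleton, forall_eq_or_imp, forall_eq, List.Pairwise.nil, and_true,
        IsEmpty.forall_iff, Set.disjoint_iff_forall_ne, Set.mem_insert_iff,
        Set.mem_singleton_iff]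
      refine ⟨⟨?_, ?_⟩, ?_, fun _ => trivial⟩ <;> simp_all [eq_comm]
  · -- h → a
    refine ⟨by simp [N], by simp [N], hah, ?_, ?_, ?_⟩
    · intro gr hg hy
      simp only [G, Set.mem_insert_iff, Set.mem_singleton_iff] at hg
      rcases hg with rfl|rfl|rfl|rfl|rfl|rfl|rfl
      · simp at hy
      · simp at hy
      · simp at hy
      · simp at hy
      · exact ⟨(({b, e, c}, c, e) : Set X × X × X), by simp, rfl⟩
      · exact ⟨(({b, g, f}, f, g) : Set X × X × X), by simp, rfl⟩
      · exact ⟨(({b, j, h}, b, j) : Set X × X × X), by simp, rfl⟩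
    · intro p hp
      fin_cases hp <;> simp_all [N, G, eq_comm]
    · simp only [List.pairwise_cons, List.mem_cons, List.not_mem_nil, or_false,
        List.mem_singleton, forall_eq_or_imp, forall_eq, List.Pairwise.nil, and_true,
        IsEmpty.forall_iff, Set.disjoint_iff_forall_ne, Set.mem_insert_iff,
        Set.mem_singleton_iff]
      refine ⟨⟨?_, ?_⟩, ?_, fun _ => trivial⟩ <;> simp_all [eq_comm]
  · -- i → a
    refine ⟨by simp [N], by simp [N], hai, ?_, ?_, ?_⟩
    · intro gr hg hy
      simp only [G, Set.mem_insert_iff, Set.mem_singleton_iff] at hg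
      rcases hg with rfl|rfl|rfl|rfl|rfl|rfl|rfl
      · simp at hy
      · simp at hy
      · simp at hy
      · simp at hy
      · exact ⟨(({b, e, c}, b, c) : Set X × X × X), by simp, rfl⟩
      · exact ⟨(({b, g, f}, f, g) : Set X × X × X), by simp, rfl⟩
      · exact ⟨(({b, j, h}, h, j) : Set X × X × X), by simp, rfl⟩
    · intro p hp
      fin_cases hp <;> simp_all [N, G, eq_comm]
    · simp only [List.pairwise_cons, List.mem_cons, List.not_mem_nil, or_false,
        List.mem_singleton, forall_eq_or_imp, forall_eq, List.Pairwise.nil, and_true,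
        IsEmpty.forall_iff, Set.disjoint_iff_forall_ne, Set.mem_insert_iff,
        Set.mem_singleton_iff]
      refine ⟨⟨?_, ?_⟩, ?_, fun _ => trivial⟩ <;> simp_all [eq_comm]
  · intro x hx
    simp only [Set.mem_insert_iff, Set.mem_singleton_iff] at hx
    rcases hx with hx|hx|hx|hx <;> subst hx
    · refine ⟨a, [({x, e, c}, e, c), ({x, g, f}, g, f), ({x, j, h}, j, h)], ?_⟩
      refine ⟨by simp [N], by simp [N], hab, ?_, ?_, ?_⟩
      · intro gr hg hy
        simp only [G, Set.mem_insert_iff, Set.mem_singleton_iff] at hg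
        rcases hg with rfl|rfl|rfl|rfl|rfl|rfl|rfl
        · simp at hy
        · simp at hy
        · simp at hy
        · simp at hy
        · exact ⟨(({x, e, c}, e, c) : Set X × X × X), by simp, rfl⟩
        · exact ⟨(({x, g, f}, g, f) : Set X × X × X), by simp, rfl⟩
        · exact ⟨(({x, j, h}, j, h) : Set X × X × X), by simp, rfl⟩
      · intro p hp
        fin_cases hp <;> simp_all [N, G, eq_comm]
      · simp only [List.pairwise_cons, List.mem_cons, List.not_mem_nil, or_false,
          List.mem_singleton, forall_eq_or_imp, forall_eq, List.Pairwise.nil, and_true,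
          IsEmpty.forall_iff, Set.disjoint_iff_forall_ne, Set.mem_insert_iff,
          Set.mem_singleton_iff]
        refine ⟨⟨?_, ?_⟩, ?_, fun _ => trivial⟩ <;> simp_all [eq_comm]
    · refine ⟨a, [({b, e, c}, e, c), ({b, g, x}, b, g), ({b, j, h}, j, h)], ?_⟩
      refine ⟨by simp [N], by simp [N], haf, ?_, ?_, ?_⟩
      · intro gr hg hy
        simp only [G, Set.mem_insert_iff, Set.mem_singleton_iff] at hg
        rcases hg with rfl|rfl|rfl|rfl|rfl|rfl|rfl
        · simp at hy
        · simp at hy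
        · simp at hy
        · simp at hy
        · exact ⟨(({b, e, c}, e, c) : Set X × X × X), by simp, rfl⟩
        · exact ⟨(({b, g, x}, b, g) : Set X × X × X), by simp, rfl⟩
        · exact ⟨(({b, j, h}, j, h) : Set X × X × X), by simp, rfl⟩
      · intro p hp
        fin_cases hp <;> simp_all [N, G, eq_comm]
      · simp only [List.pairwise_cons, List.mem_cons, List.not_mem_nil, or_false,
          List.mem_singleton, forall_eq_or_imp, forall_eq, List.Pairwise.nil, and_true,
          IsEmpty.forall_iff, Set.disjoint_iff_forall_ne, Set.mem_insert_iff,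
          Set.mem_singleton_iff]
        refine ⟨⟨?_, ?_⟩, ?_, fun _ => trivial⟩ <;> simp_all [eq_comm]
    · refine ⟨a, [({b, e, c}, e, c), ({b, x, f}, b, f), ({b, j, h}, j, h)], ?_⟩
      refine ⟨by simp [N], by simp [N], hag, ?_, ?_, ?_⟩
      · intro gr hg hy
        simp only [G, Set.mem_insert_iff, Set.mem_singleton_iff] at hg
        rcases hg with rfl|rfl|rfl|rfl|rfl|rfl|rfl
        · simp at hy
        · simp at hy
        · simp at hy
        · simp at hy
        · exact ⟨(({b, e, c}, e, c) : Set X × X × X), by simp, rfl⟩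
        · exact ⟨(({b, x, f}, b, f) : Set X × X × X), by simp, rfl⟩
        · exact ⟨(({b, j, h}, j, h) : Set X × X × X), by simp, rfl⟩
      · intro p hp
        fin_cases hp <;> simp_all [N, G, eq_comm]
      · simp only [List.pairwise_cons, List.mem_cons, List.not_mem_nil, or_false,
          List.mem_singleton, forall_eq_or_imp, forall_eq, List.Pairwise.nil, and_true,
          IsEmpty.forall_iff, Set.disjoint_iff_forall_ne, Set.mem_insert_iff,
          Set.mem_singleton_iff]
        refine ⟨⟨?_, ?_⟩, ?_, fun _ => trivial⟩ <;> simp_all [eq_comm]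
    · refine ⟨a, [({b, e, c}, e, c), ({b, g, f}, g, f), ({b, x, h}, b, h)], ?_⟩
      refine ⟨by simp [N], by simp [N], haj, ?_, ?_, ?_⟩
      · intro gr hg hy
        simp only [G, Set.mem_insert_iff, Set.mem_singleton_iff] at hg
        rcases hg with rfl|rfl|rfl|rfl|rfl|rfl|rfl
        · simp at hy
        · simp at hy
        · simp at hy
        · simp at hy
        · exact ⟨(({b, e, c}, e, c) : Set X × X × X), by simp, rfl⟩
        · exact ⟨(({b, g, f}, g, f) : Set X × X × X), by simp, rfl⟩
        · exact ⟨(({b, x, h}, b, h) : Set X × X × X), by simp, rfl⟩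
      · intro p hp
        fin_cases hp <;> simp_all [N, G, eq_comm]
      · simp only [List.pairwise_cons, List.mem_cons, List.not_mem_nil, or_false,
          List.mem_singleton, forall_eq_or_imp, forall_eq, List.Pairwise.nil, and_true,
          IsEmpty.forall_iff, Set.disjoint_iff_forall_ne, Set.mem_insert_iff,
          Set.mem_singleton_iff]
        refine ⟨⟨?_, ?_⟩, ?_, fun _ => trivial⟩ <;> simp_all [eq_comm]
end

section
/- On the 4×4 board, the ten winning lines of the 4-in-a-row game (4 rows, 4 columns, 2 main diagonals) can be partitioned into two disjoint sets of five lines, each admitting a valid BiTriangle matching set, with the two marker sets disjoint and together equal to all 16 squares; consequently, the second player can ensure that every one of the ten lines contains at least one second-player stone, so the (4,4,4)-game is a draw. -/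
/-- A strategy: given the move number and the history of moves, produce the next move. -/
def Strategy (X : Type*) : Type _ :=
  (n : ℕ) → (Fin n → X) → X

/-- A legal play of the game on the finite board `X`: the moves made during the game
(one move per cell, the game lasting `Fintype.card X` moves) are pairwise distinct,
i.e. every move claims a previously unclaimed element. -/
def IsPlay {X : Type*} [Fintype X] (s : ℕ → X) : Prop :=
  ∀ m n : ℕ, m < Fintype.card X → n < Fintype.card X → s m = s n → m = n

/-- The second player (moving at odd times) follows strategy `σ` in the play `s`. -/
def PlaysSecond {X : Type*} [Fintype X] (σ : Strategy X) (s : ℕ → X) : Prop :=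
  ∀ n : ℕ, n % 2 = 1 → n < Fintype.card X → s n = σ n (fun i => s i.val)

/-- The first player (moving at even times) follows strategy `σ` in the play `s`. -/
def PlaysFirst {X : Type*} [Fintype X] (σ : Strategy X) (s : ℕ → X) : Prop :=
  ∀ n : ℕ, n % 2 = 0 → n < Fintype.card X → s n = σ n (fun i => s i.val)

/-- A strategy is legal if it never claims an already claimed element. -/
def LegalStrategy {X : Type*} (σ : Strategy X) : Prop :=
  ∀ (n : ℕ) (h : Fin n → X) (i : Fin n), σ n h ≠ h i

/-- The set of elements claimed by the first player during the whole play. -/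
def firstClaims {X : Type*} [Fintype X] (s : ℕ → X) : Set X :=
  {x | ∃ n : ℕ, n < Fintype.card X ∧ n % 2 = 0 ∧ s n = x}

/-- The set of elements claimed by the second player during the whole play. -/
def secondClaims {X : Type*} [Fintype X] (s : ℕ → X) : Set X :=
  {x | ∃ n : ℕ, n < Fintype.card X ∧ n % 2 = 1 ∧ s n = x}

/-- The set of elements claimed by the first player up to (and including) time `n`. -/
def firstClaimsBy {X : Type*} (s : ℕ → X) (n : ℕ) : Set X :=
  {x | ∃ m : ℕ, m ≤ n ∧ m % 2 = 0 ∧ s m = x}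

/-- The set of elements claimed by the second player up to (and including) time `n`. -/
def secondClaimsBy {X : Type*} (s : ℕ → X) (n : ℕ) : Set X :=
  {x | ∃ m : ℕ, m ≤ n ∧ m % 2 = 1 ∧ s m = x}

/-- The second-player strategy `σ` blocks every target set of `H`: in every legal play
following `σ`, the first player never claims all elements of a target set. -/
def BlocksAll {X : Type*} [Fintype X] (H : Set (Set X)) (σ : Strategy X) : Prop :=
  ∀ s : ℕ → X, IsPlay s → PlaysSecond σ s → ∀ g ∈ H, ¬ g ⊆ firstClaims s

/-- `σ` is a winning strategy for the second player: in every legal play following it,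
at some moment the second player has completed a target set while the first player
has not yet completed any target set. -/
def SecondWinning {X : Type*} [Fintype X] (H : Set (Set X)) (σ : Strategy X) : Prop :=
  ∀ s : ℕ → X, IsPlay s → PlaysSecond σ s →
    ∃ n : ℕ, n < Fintype.card X ∧ (∃ g ∈ H, g ⊆ secondClaimsBy s n) ∧
      ∀ g ∈ H, ¬ g ⊆ firstClaimsBy s n

/-- `σ` is a winning strategy for the first player: in every legal play following it,
at some moment the first player has completed a target set while the second player
has not yet completed any target set. -/
def FirstWinning {X : Type*} [Fintype X] (H : Set (Set X)) (σ : Strategy X) : Prop :=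
  ∀ s : ℕ → X, IsPlay s → PlaysFirst σ s →
    ∃ n : ℕ, n < Fintype.card X ∧ (∃ g ∈ H, g ⊆ firstClaimsBy s n) ∧
      ∀ g ∈ H, ¬ g ⊆ secondClaimsBy s n

/-- A matching set `(N, G, C)`: a set `N` of marker nodes, a set `G` of groups, and a
coverage set given by a designated second-player `reply` to every first move together
with an assignment `pairs` of a pair of markers to each group not covered by the reply. -/
structure MatchingSet (X : Type*) where
  N : Set X
  G : Set (Set X)
  reply : X → X
  pairs : X → Set X → Set X

/-- Validity of a matching set: for every first move on a marker `x`, the reply is a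
different marker, and every group not containing the reply is assigned a 2-element
pair of remaining markers contained in that group, all assigned pairs pairwise
disjoint (a Hales-Jewett pairing of the residual groups). -/
def MatchingSet.Valid {X : Type*} (M : MatchingSet X) : Prop :=
  ∀ x ∈ M.N,
    M.reply x ∈ M.N ∧ M.reply x ≠ x ∧
    (∀ g ∈ M.G, M.reply x ∉ g →
      M.pairs x g ⊆ g ∧ M.pairs x g ⊆ M.N ∧ (M.pairs x g).ncard = 2 ∧
      x ∉ M.pairs x g ∧ M.reply x ∉ M.pairs x g) ∧
    (∀ g ∈ M.G, ∀ g' ∈ M.G, M.reply x ∉ g → M.reply x ∉ g' → g ≠ g' →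
      Disjoint (M.pairs x g) (M.pairs x g'))

/-- The ten winning lines of the 4-in-a-row game on the `4 × 4` board:
4 rows, 4 columns and the 2 main diagonals. -/
def lines4 : Set (Set (Fin 4 × Fin 4)) :=
  {g | (∃ i : Fin 4, g = {p : Fin 4 × Fin 4 | p.1 = i}) ∨
       (∃ j : Fin 4, g = {p : Fin 4 × Fin 4 | p.2 = j}) ∨
       g = {p : Fin 4 × Fin 4 | p.1 = p.2} ∨
       g = {p : Fin 4 × Fin 4 | (p.1 : ℕ) + (p.2 : ℕ) = 3}}

namespace FourGame

abbrev Cell : Type := Fin 4 × Fin 4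

def enc (p : Cell) : ℕ := 4 * p.1.val + p.2.val
def dec (n : ℕ) : Cell := (⟨n / 4 % 4, by omega⟩, ⟨n % 4, by omega⟩)

def rtab : ℕ → ℕ
  | 0 => 9 | 1 => 9 | 2 => 1 | 3 => 15 | 4 => 9 | 5 => 9 | 6 => 15 | 7 => 9
  | 8 => 9 | 9 => 8 | 10 => 15 | 11 => 3 | 12 => 6 | 13 => 6 | 14 => 6 | 15 => 10
  | _ => 0

def ptab : ℕ → ℕ → ℕ
  | 0, 1 => 2 | 0, 2 => 1 | 0, 5 => 7 | 0, 7 => 5 | 0, 4 => 8 | 0, 8 => 4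
  | 1, 0 => 2 | 1, 2 => 0 | 1, 5 => 7 | 1, 7 => 5 | 1, 4 => 8 | 1, 8 => 4
  | 2, 5 => 7 | 2, 7 => 5 | 2, 8 => 9 | 2, 9 => 8 | 2, 0 => 4 | 2, 4 => 0
  | 3, 10 => 14 | 3, 14 => 10 | 3, 6 => 12 | 3, 12 => 6
  | 4, 1 => 2 | 4, 2 => 1 | 4, 5 => 7 | 4, 7 => 5 | 4, 0 => 8 | 4, 8 => 0
  | 5, 1 => 2 | 5, 2 => 1 | 5, 4 => 7 | 5, 7 => 4 | 5, 0 => 8 | 5, 8 => 0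
  | 6, 10 => 14 | 6, 14 => 10 | 6, 3 => 12 | 6, 12 => 3
  | 7, 1 => 2 | 7, 2 => 1 | 7, 4 => 5 | 7, 5 => 4 | 7, 0 => 8 | 7, 8 => 0
  | 8, 1 => 2 | 8, 2 => 1 | 8, 5 => 7 | 8, 7 => 5 | 8, 0 => 4 | 8, 4 => 0
  | 9, 0 => 2 | 9, 2 => 0 | 9, 4 => 7 | 9, 7 => 4 | 9, 1 => 5 | 9, 5 => 1
  | 10, 6 => 14 | 10, 14 => 6 | 10, 3 => 12 | 10, 12 => 3
  | 11, 12 => 13 | 11, 13 => 12 | 11, 6 => 14 | 11, 14 => 6 | 11, 10 => 15 | 11, 15 => 10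
  | 12, 13 => 14 | 12, 14 => 13 | 12, 3 => 11 | 12, 11 => 3 | 12, 10 => 15 | 12, 15 => 10
  | 13, 12 => 14 | 13, 14 => 12 | 13, 3 => 11 | 13, 11 => 3 | 13, 10 => 15 | 13, 15 => 10
  | 14, 12 => 13 | 14, 13 => 12 | 14, 3 => 11 | 14, 11 => 3 | 14, 10 => 15 | 14, 15 => 10
  | 15, 13 => 14 | 15, 14 => 13 | 15, 3 => 11 | 15, 11 => 3 | 15, 6 => 12 | 15, 12 => 6
  | _, a => a

def qtab : ℕ → ℕ → ℕ × ℕ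
  | 0, 0 => (1, 2) | 0, 1 => (5, 7) | 0, 4 => (4, 8)
  | 1, 0 => (0, 2) | 1, 1 => (5, 7) | 1, 4 => (4, 8)
  | 2, 1 => (5, 7) | 2, 2 => (8, 9) | 2, 4 => (0, 4)
  | 3, 6 => (10, 14) | 3, 9 => (6, 12)
  | 4, 0 => (1, 2) | 4, 1 => (5, 7) | 4, 4 => (0, 8)
  | 5, 0 => (1, 2) | 5, 1 => (4, 7) | 5, 4 => (0, 8)
  | 6, 6 => (10, 14) | 6, 9 => (3, 12)
  | 7, 0 => (1, 2) | 7, 1 => (4, 5) | 7, 4 => (0, 8)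
  | 8, 0 => (1, 2) | 8, 1 => (5, 7) | 8, 4 => (0, 4)
  | 9, 0 => (0, 2) | 9, 1 => (4, 7) | 9, 5 => (1, 5)
  | 10, 6 => (6, 14) | 10, 9 => (3, 12)
  | 11, 3 => (12, 13) | 11, 6 => (6, 14) | 11, 8 => (10, 15)
  | 12, 3 => (13, 14) | 12, 7 => (3, 11) | 12, 8 => (10, 15)
  | 13, 3 => (12, 14) | 13, 7 => (3, 11) | 13, 8 => (10, 15)
  | 14, 3 => (12, 13) | 14, 7 => (3, 11) | 14, 8 => (10, 15)
  | 15, 3 => (13, 14) | 15, 7 => (3, 11) | 15, 9 => (6, 12)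
  | _, _ => (0, 0)

def replyF (p : Cell) : Cell := dec (rtab (enc p))
def partnerF (x a : Cell) : Cell := dec (ptab (enc x) (enc a))
def pairA (x : Cell) (l : ℕ) : Cell := dec (qtab (enc x) l).1
def pairB (x : Cell) (l : ℕ) : Cell := dec (qtab (enc x) l).2

def N1f : Finset Cell := {(0,0),(0,1),(0,2),(1,0),(1,1),(1,3),(2,0),(2,1)}
def halfB (p : Cell) : Bool := decide (p ∈ N1f)

def lineB (l : ℕ) (p : Cell) : Bool :=
  if l < 4 then p.1.val == l
  else if l < 8 then p.2.val == l - 4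
  else if l = 8 then p.1.val == p.2.val
  else p.1.val + p.2.val == 3

def lineF (l : ℕ) : Finset Cell := Finset.univ.filter (fun p => lineB l p = true)

def halfOfLine (l : ℕ) : Bool := l == 0 || l == 1 || l == 2 || l == 4 || l == 5

def pairFin (x : Cell) (l : ℕ) : Finset Cell := {pairA x l, pairB x l}

-- basic reply facts
lemma L1 : ∀ x : Cell, halfB (replyF x) = halfB x ∧ replyF x ≠ x := by decide

-- coverage fact for the strategy
lemma L2 : ∀ l : Fin 10, ∀ x : Cell, halfB x = halfOfLine l.val →
    replyF x ∈ lineF l.val ∨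
    (pairA x l.val ≠ pairB x l.val ∧ pairA x l.val ∈ lineF l.val ∧ pairB x l.val ∈ lineF l.val ∧
     halfB (pairA x l.val) = halfB x ∧ halfB (pairB x l.val) = halfB x ∧
     pairA x l.val ≠ x ∧ pairB x l.val ≠ x ∧
     partnerF x (pairA x l.val) = pairB x l.val ∧ partnerF x (pairB x l.val) = pairA x l.val) := by
  decide

lemma L3 : ∀ l : Fin 10, ∃ y ∈ lineF l.val, halfB y = halfOfLine l.val := by decide

lemma L4 : ∀ l : Fin 10, ∀ x : Cell, halfB x = halfOfLine l.val →
    replyF x ∉ lineF l.val →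
    pairFin x l.val ⊆ lineF l.val ∧
    pairFin x l.val ⊆ (if halfB x then N1f else N1fᶜ) ∧
    (pairFin x l.val).card = 2 ∧ x ∉ pairFin x l.val ∧ replyF x ∉ pairFin x l.val := by
  decide

lemma L5 : ∀ l l' : Fin 10, ∀ x : Cell, halfB x = halfOfLine l.val →
    halfOfLine l'.val = halfOfLine l.val →
    replyF x ∉ lineF l.val → replyF x ∉ lineF l'.val → l ≠ l' →
    Disjoint (pairFin x l.val) (pairFin x l'.val) := by
  decide

lemma L7 : ∀ l l' : Fin 10, l ≠ l' → lineF l.val ≠ lineF l'.val := by decide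


noncomputable def unclaimedOf (n : ℕ) (s : ℕ → Cell) : Cell :=
  if h : ∃ y : Cell, ∀ m, m < n → s m ≠ y then h.choose else ((0, 0) : Cell)

noncomputable def desire (s : ℕ → Cell) (n t : ℕ) : Cell :=
  if s (n - 1) = s t then replyF (s t) else partnerF (s t) (s (n - 1))

open Classical in
noncomputable def sigmaAux (n : ℕ) (s : ℕ → Cell) : Cell :=
  if hP : ∃ m, m < n ∧ m % 2 = 0 ∧ halfB (s m) = halfB (s (n - 1)) then
    if desire s n (Nat.find hP) ≠ s (n - 1) ∧ ∀ m, m < n → s m ≠ desire s n (Nat.find hP)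
    then desire s n (Nat.find hP) else unclaimedOf n s
  else unclaimedOf n s

noncomputable def sigma : (n : ℕ) → (Fin n → Cell) → Cell := fun n h =>
  sigmaAux n (fun m => if hm : m < n then h ⟨m, hm⟩ else ((0, 0) : Cell))

lemma sigma_eq (s : ℕ → Cell) (n : ℕ) :
    sigma n (fun i : Fin n => s i.val) =
      sigmaAux n (fun m => if m < n then s m else ((0, 0) : Cell)) := by
  rfl

lemma sigma_fires (s : ℕ → Cell) (t n : ℕ) (ht : t < n) (hte : t % 2 = 0)
    (hhalf : halfB (s t) = halfB (s (n - 1)))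
    (hmin : ∀ m, m < t → m % 2 = 0 → halfB (s m) ≠ halfB (s (n - 1)))
    (d : Cell)
    (hd : d = if s (n - 1) = s t then replyF (s t) else partnerF (s t) (s (n - 1)))
    (hda : d ≠ s (n - 1))
    (hfree : ∀ m, m < n → s m ≠ d) :
    sigma n (fun i : Fin n => s i.val) = d := by
  rw [sigma_eq]
  set F : ℕ → Cell := fun m => if m < n then s m else ((0, 0) : Cell) with hFdef
  have h1 : n - 1 < n := by omega
  have hF : ∀ m, m < n → F m = s m := fun m hm => by simp [hFdef, hm]
  have hP : ∃ m, m < n ∧ m % 2 = 0 ∧ halfB (F m) = halfB (F (n - 1)) :=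
    ⟨t, ht, hte, by rw [hF t ht, hF (n - 1) h1]; exact hhalf⟩
  rw [sigmaAux, dif_pos hP]
  have hfind : Nat.find hP = t := by
    apply le_antisymm (Nat.find_min' _ ⟨ht, hte, by rw [hF t ht, hF (n - 1) h1]; exact hhalf⟩)
    by_contra hlt
    push_neg at hlt
    obtain ⟨hm, he, hh⟩ := Nat.find_spec hP
    refine hmin (Nat.find hP) hlt he ?_
    rw [← hF _ hm, ← hF (n - 1) h1]
    exact hh
  have hdF : desire F n (Nat.find hP) = d := by
    rw [hfind, desire, hF t ht, hF (n - 1) h1, ← hd]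
  rw [hdF, if_pos ⟨by rw [hF (n - 1) h1]; exact hda, fun m hm => by rw [hF m hm]; exact hfree m hm⟩]


section Play

variable {s : ℕ → Cell}
  (hplay : ∀ m n : ℕ, m < 16 → n < 16 → s m = s n → m = n)
  (hsec : ∀ n : ℕ, n % 2 = 1 → n < 16 → s n = sigma n (fun i : Fin n => s i.val))

include hplay in
lemma play_surj : ∀ y : Cell, ∃ m, m < 16 ∧ s m = y := by
  intro y
  have hcard : Fintype.card Cell = 16 := by simp
  have hinj : Function.Injective (fun i : Fin 16 => s i.val) := by
    intro i j hij
    exact Fin.ext (hplay i.val j.val i.isLt j.isLt hij)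
  have hbij : Function.Bijective (fun i : Fin 16 => s i.val) :=
    (Fintype.bijective_iff_injective_and_card _).2 ⟨hinj, by simp [hcard]⟩
  obtain ⟨i, hi⟩ := hbij.2 y
  exact ⟨i.val, i.isLt, hi⟩

include hsec in
lemma claimA (t : ℕ) (ht16 : t < 16) (hte : t % 2 = 0)
    (hmin : ∀ m, m < t → m % 2 = 0 → halfB (s m) ≠ halfB (s t)) :
    ∃ n, n < 16 ∧ n % 2 = 1 ∧ s n = replyF (s t) := by
  by_cases hc : ∃ m, m ≤ t ∧ s m = replyF (s t)
  · obtain ⟨m, hm, hsm⟩ := hc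
    rcases Nat.even_or_odd m with he | ho
    · exfalso
      have he' : m % 2 = 0 := Nat.even_iff.mp he
      rcases lt_or_eq_of_le hm with hlt | heq
      · exact hmin m hlt he' (by rw [hsm]; exact (L1 (s t)).1)
      · exact (L1 (s t)).2 (by rw [heq] at hsm; exact hsm.symm)
    · exact ⟨m, by omega, Nat.odd_iff.mp ho, hsm⟩
  · push_neg at hc
    have ht1 : (t + 1) - 1 = t := by omega
    have hfire := sigma_fires s t (t + 1) (by omega) hte (by rw [ht1])
      (by rw [ht1]; exact fun m hm he => hmin m hm he)
      (replyF (s t)) (by rw [ht1, if_pos rfl]) (by rw [ht1]; exact (L1 (s t)).2)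
      (fun m hm => hc m (by omega))
    refine ⟨t + 1, by omega, by omega, ?_⟩
    rw [hsec (t + 1) (by omega) (by omega)]
    exact hfire

include hplay hsec in
lemma claimB_aux (t : ℕ) (ht16 : t < 16) (hte : t % 2 = 0)
    (hmin : ∀ m, m < t → m % 2 = 0 → halfB (s m) ≠ halfB (s t))
    (a b : Cell) (hab : a ≠ b) (ha : halfB a = halfB (s t))
    (hax : a ≠ s t) (hpa : partnerF (s t) a = b)
    (ma mb : ℕ) (hma : ma < 16) (hmb : mb < 16) (hsa : s ma = a) (hsb : s mb = b)
    (hmae : ma % 2 = 0) (hmbe : mb % 2 = 0) (hlt : ma < mb) : False := by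
  have htma : t < ma + 1 := by
    rcases Nat.lt_or_ge ma t with h | h
    · exact absurd (by rw [hsa]; exact ha) (hmin ma h hmae)
    · omega
  have h1 : (ma + 1) - 1 = ma := by omega
  have hfire := sigma_fires s t (ma + 1) htma hte
    (by rw [h1, hsa, ha])
    (by rw [h1, hsa]; intro m hm he hcon; exact hmin m hm he (by rw [hcon, ha]))
    b
    (by rw [h1, hsa, if_neg hax, hpa])
    (by rw [h1, hsa]; exact hab.symm)
    (by
      intro m hm hcon
      have hm16 : m < 16 := by omega
      have : m = mb := hplay m mb hm16 hmb (by rw [hcon, hsb])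
      omega)
  have hfin : s (ma + 1) = b := by
    rw [hsec (ma + 1) (by omega) (by omega)]; exact hfire
  have : ma + 1 = mb := hplay (ma + 1) mb (by omega) hmb (by rw [hfin, hsb])
  omega

include hplay hsec in
lemma claimB (t : ℕ) (ht16 : t < 16) (hte : t % 2 = 0)
    (hmin : ∀ m, m < t → m % 2 = 0 → halfB (s m) ≠ halfB (s t))
    (a b : Cell) (hab : a ≠ b) (ha : halfB a = halfB (s t)) (hb : halfB b = halfB (s t))
    (hax : a ≠ s t) (hbx : b ≠ s t)
    (hpa : partnerF (s t) a = b) (hpb : partnerF (s t) b = a) :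
    (∃ n, n < 16 ∧ n % 2 = 1 ∧ s n = a) ∨ (∃ n, n < 16 ∧ n % 2 = 1 ∧ s n = b) := by
  obtain ⟨ma, hma, hsa⟩ := play_surj hplay a
  obtain ⟨mb, hmb, hsb⟩ := play_surj hplay b
  rcases Nat.even_or_odd ma with hea | hoa
  · rcases Nat.even_or_odd mb with heb | hob
    · exfalso
      have hea' := Nat.even_iff.mp hea
      have heb' := Nat.even_iff.mp heb
      have hne : ma ≠ mb := fun h => hab (by rw [← hsa, ← hsb, h])
      rcases Nat.lt_or_ge ma mb with h | h
      · exact claimB_aux hplay hsec t ht16 hte hmin a b hab ha hax hpa ma mb hma hmb hsa hsb hea' heb' h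
      · exact claimB_aux hplay hsec t ht16 hte hmin b a hab.symm hb hbx hpb mb ma hmb hma hsb hsa heb' hea' (by omega)
    · exact Or.inr ⟨mb, hmb, Nat.odd_iff.mp hob, hsb⟩
  · exact Or.inl ⟨ma, hma, Nat.odd_iff.mp hoa, hsa⟩

end Play


lemma hrow : ∀ (i : Fin 4) (p : Cell), p.1 = i ↔ p ∈ lineF i.val := by decide
lemma hcol : ∀ (j : Fin 4) (p : Cell), p.2 = j ↔ p ∈ lineF (j.val + 4) := by decide
lemma hdia : ∀ p : Cell, p.1 = p.2 ↔ p ∈ lineF 8 := by decide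
lemma hant : ∀ p : Cell, (p.1 : ℕ) + (p.2 : ℕ) = 3 ↔ p ∈ lineF 9 := by decide

lemma lines4_mem_iff (g : Set Cell) : g ∈ lines4 ↔ ∃ l : Fin 10, g = ↑(lineF l.val) := by
  constructor
  · intro hg
    simp only [lines4, Set.mem_setOf_eq] at hg
    rcases hg with ⟨i, rfl⟩ | ⟨j, rfl⟩ | rfl | rfl
    · exact ⟨⟨i.val, by omega⟩, Set.ext fun p => by simpa using hrow i p⟩
    · exact ⟨⟨j.val + 4, by omega⟩, Set.ext fun p => by simpa using hcol j p⟩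
    · exact ⟨⟨8, by omega⟩, Set.ext fun p => by simpa using hdia p⟩
    · exact ⟨⟨9, by omega⟩, Set.ext fun p => by simpa using hant p⟩
  · rintro ⟨l, rfl⟩
    simp only [lines4, Set.mem_setOf_eq]
    fin_cases l
    · exact Or.inl ⟨0, Set.ext fun p => by simpa using (hrow 0 p).symm⟩
    · exact Or.inl ⟨1, Set.ext fun p => by simpa using (hrow 1 p).symm⟩
    · exact Or.inl ⟨2, Set.ext fun p => by simpa using (hrow 2 p).symm⟩
    · exact Or.inl ⟨3, Set.ext fun p => by simpa using (hrow 3 p).symm⟩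
    · exact Or.inr (Or.inl ⟨0, Set.ext fun p => by simpa using (hcol 0 p).symm⟩)
    · exact Or.inr (Or.inl ⟨1, Set.ext fun p => by simpa using (hcol 1 p).symm⟩)
    · exact Or.inr (Or.inl ⟨2, Set.ext fun p => by simpa using (hcol 2 p).symm⟩)
    · exact Or.inr (Or.inl ⟨3, Set.ext fun p => by simpa using (hcol 3 p).symm⟩)
    · exact Or.inr (Or.inr (Or.inl (Set.ext fun p => by simpa using (hdia p).symm)))
    · exact Or.inr (Or.inr (Or.inr (Set.ext fun p => by simpa using (hant p).symm)))

section Play2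

variable {s : ℕ → Cell}
  (hplay : ∀ m n : ℕ, m < 16 → n < 16 → s m = s n → m = n)
  (hsec : ∀ n : ℕ, n % 2 = 1 → n < 16 → s n = sigma n (fun i : Fin n => s i.val))

include hplay hsec in
theorem blocks_lines : ∀ g ∈ lines4, ∃ y, y ∈ g ∧ ∃ n, n < 16 ∧ n % 2 = 1 ∧ s n = y := by
  intro g hg
  obtain ⟨l, rfl⟩ := (lines4_mem_iff g).1 hg
  by_cases hact : ∃ m, m < 16 ∧ m % 2 = 0 ∧ halfB (s m) = halfOfLine l.val
  · classical
    have ht16 : Nat.find hact < 16 := (Nat.find_spec hact).1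
    have hte : Nat.find hact % 2 = 0 := (Nat.find_spec hact).2.1
    have hth : halfB (s (Nat.find hact)) = halfOfLine l.val := (Nat.find_spec hact).2.2
    have hmin : ∀ m, m < Nat.find hact → m % 2 = 0 →
        halfB (s m) ≠ halfB (s (Nat.find hact)) := by
      intro m hm he hcon
      exact Nat.find_min hact hm ⟨by omega, he, by rw [hcon, hth]⟩
    rcases L2 l (s (Nat.find hact)) hth with hrep |
      ⟨hne, hA, hB, hhA, hhB, hxA, hxB, hpA, hpB⟩
    · obtain ⟨n, h1, h2, h3⟩ := claimA hsec (Nat.find hact) ht16 hte hmin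
      exact ⟨replyF (s (Nat.find hact)), Finset.mem_coe.mpr hrep, n, h1, h2, h3⟩
    · rcases claimB hplay hsec (Nat.find hact) ht16 hte hmin
        (pairA (s (Nat.find hact)) l.val) (pairB (s (Nat.find hact)) l.val)
        hne hhA hhB hxA hxB hpA hpB with ⟨n, h1, h2, h3⟩ | ⟨n, h1, h2, h3⟩
      · exact ⟨_, Finset.mem_coe.mpr hA, n, h1, h2, h3⟩
      · exact ⟨_, Finset.mem_coe.mpr hB, n, h1, h2, h3⟩
  · obtain ⟨y, hyl, hyh⟩ := L3 l
    obtain ⟨m, hm16, hsm⟩ := play_surj hplay y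
    rcases Nat.even_or_odd m with he | ho
    · exact absurd ⟨m, hm16, Nat.even_iff.mp he, by rw [hsm, hyh]⟩ hact
    · exact ⟨y, Finset.mem_coe.mpr hyl, m, hm16, Nat.odd_iff.mp ho, hsm⟩

end Play2

def emb1 : Fin 5 → Fin 10 := ![0, 1, 2, 4, 5]
def emb2 : Fin 5 → Fin 10 := ![3, 6, 7, 8, 9]
def N2f : Finset Cell := N1fᶜ

def mkM (Nf : Finset Cell) (emb : Fin 5 → Fin 10) : MatchingSet Cell where
  N := ↑Nf
  G := Set.range (fun j : Fin 5 => (↑(lineF (emb j).val) : Set Cell))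
  reply := replyF
  pairs := fun x g =>
    {y : Cell | ∃ j : Fin 5, g = ↑(lineF (emb j).val) ∧ y ∈ pairFin x (emb j).val}

def M1 : MatchingSet Cell := mkM N1f emb1
def M2 : MatchingSet Cell := mkM N2f emb2

lemma line_inj {l l' : Fin 10} (h : (↑(lineF l.val) : Set Cell) = ↑(lineF l'.val)) :
    l = l' := by
  by_contra hne
  exact L7 l l' hne (Finset.coe_injective h)

lemma pairs_eq (Nf : Finset Cell) (emb : Fin 5 → Fin 10) (hinj : Function.Injective emb)
    (x : Cell) (j : Fin 5) :
    (mkM Nf emb).pairs x ↑(lineF (emb j).val) = ↑(pairFin x (emb j).val) := by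
  ext y
  constructor
  · rintro ⟨j', heq, hy⟩
    rwa [hinj (line_inj heq)]
  · intro hy
    exact ⟨j, rfl, hy⟩

lemma valid_general (b : Bool) (Nf : Finset Cell) (emb : Fin 5 → Fin 10)
    (hinj : Function.Injective emb)
    (hNf : ∀ x : Cell, x ∈ Nf ↔ halfB x = b)
    (hNfif : ∀ x : Cell, halfB x = b → (if halfB x then N1f else N1fᶜ) = Nf)
    (hemb : ∀ j : Fin 5, halfOfLine ((emb j) : Fin 10).val = b) :
    (mkM Nf emb).Valid := by
  intro x hx
  have hxb : halfB x = b := (hNf x).1 (Finset.mem_coe.mp hx)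
  refine ⟨?_, (L1 x).2, ?_, ?_⟩
  · show replyF x ∈ (↑Nf : Set Cell)
    exact Finset.mem_coe.mpr ((hNf _).2 (by rw [(L1 x).1, hxb]))
  · rintro g ⟨j, rfl⟩ hrep
    have hrep' : replyF x ∉ lineF (emb j).val := fun h => hrep (Finset.mem_coe.mpr h)
    obtain ⟨hsub, hsubN, hcard, hxmem, hrmem⟩ :=
      L4 (emb j) x (by rw [hxb, hemb j]) hrep'
    rw [pairs_eq Nf emb hinj]
    refine ⟨Finset.coe_subset.mpr hsub, ?_, ?_, ?_, ?_⟩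
    · rw [hNfif x hxb] at hsubN
      exact Finset.coe_subset.mpr hsubN
    · rw [Set.ncard_coe_finset]; exact hcard
    · exact fun h => hxmem (Finset.mem_coe.mp h)
    · exact fun h => hrmem (Finset.mem_coe.mp h)
  · rintro g ⟨j, rfl⟩ g' ⟨j', rfl⟩ hrep hrep' hne
    have h1 : replyF x ∉ lineF (emb j).val := fun h => hrep (Finset.mem_coe.mpr h)
    have h2 : replyF x ∉ lineF (emb j').val := fun h => hrep' (Finset.mem_coe.mpr h)
    have hjj : emb j ≠ emb j' := fun h =>
      hne (congrArg (fun l : Fin 10 => (↑(lineF l.val) : Set Cell)) h)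
    rw [pairs_eq Nf emb hinj, pairs_eq Nf emb hinj]
    rw [Finset.disjoint_coe]
    exact L5 (emb j) (emb j') x (by rw [hxb, hemb j]) (by rw [hemb j', hemb j]) h1 h2 hjj

lemma emb1_inj : Function.Injective emb1 := by decide
lemma emb2_inj : Function.Injective emb2 := by decide

lemma M1_valid : M1.Valid := by
  refine valid_general true N1f emb1 emb1_inj (by decide) (fun x hx => by rw [hx]; rfl)
    (by decide)

lemma M2_valid : M2.Valid := by
  refine valid_general false N2f emb2 emb2_inj (by decide) (fun x hx => by rw [hx]; rfl)
    (by decide)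

lemma noLegal (σ : Strategy (Fin 4 × Fin 4)) : ¬ LegalStrategy σ := by
  intro h
  have hcard : Fintype.card (Fin 4 × Fin 4) = 16 := by simp
  let e := Fintype.equivFin (Fin 4 × Fin 4)
  let h16 : Fin 16 → Fin 4 × Fin 4 := fun i => e.symm (Fin.cast hcard.symm i)
  have hsurj : Function.Surjective h16 := by
    intro y
    refine ⟨Fin.cast hcard (e y), ?_⟩
    simp [h16]
  obtain ⟨i, hi⟩ := hsurj (σ 16 h16)
  exact h 16 h16 i hi.symm


end FourGame

/-- **The `(4,4,4)`-game is a draw by Set Matching.** The ten lines of the `4 × 4`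
board can be partitioned into two disjoint sets of five lines, each admitting a valid
BiTriangle matching set (8 markers covering 5 groups), with disjoint marker sets that
together exhaust all 16 squares; consequently the second player can ensure that every
line contains one of his stones, and the game is a draw: neither player has a winning
strategy. -/
theorem four_four_four_draw :
    ∃ M1 M2 : MatchingSet (Fin 4 × Fin 4),
      M1.Valid ∧ M2.Valid ∧
      M1.G ∪ M2.G = lines4 ∧ Disjoint M1.G M2.G ∧
      M1.G.ncard = 5 ∧ M2.G.ncard = 5 ∧
      M1.N.ncard = 8 ∧ M2.N.ncard = 8 ∧
      Disjoint M1.N M2.N ∧ M1.N ∪ M2.N = Set.univ ∧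
      (∃ σ : Strategy (Fin 4 × Fin 4),
        ∀ s : ℕ → Fin 4 × Fin 4, IsPlay s → PlaysSecond σ s →
          ∀ g ∈ lines4, (g ∩ secondClaims s).Nonempty) ∧
      (¬ ∃ τ : Strategy (Fin 4 × Fin 4), LegalStrategy τ ∧ FirstWinning lines4 τ) ∧
      (¬ ∃ σ : Strategy (Fin 4 × Fin 4), LegalStrategy σ ∧ SecondWinning lines4 σ) := by
  classical
  have hcard : Fintype.card (Fin 4 × Fin 4) = 16 := by simp
  refine ⟨FourGame.M1, FourGame.M2, FourGame.M1_valid, FourGame.M2_valid, ?_, ?_, ?_, ?_,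
    ?_, ?_, ?_, ?_, ⟨FourGame.sigma, ?_⟩, ?_, ?_⟩
  · ext g
    simp only [FourGame.M1, FourGame.M2, FourGame.mkM, Set.mem_union, Set.mem_range,
      FourGame.lines4_mem_iff]
    constructor
    · rintro (⟨j, hj⟩ | ⟨j, hj⟩)
      · exact ⟨FourGame.emb1 j, hj.symm⟩
      · exact ⟨FourGame.emb2 j, hj.symm⟩
    · rintro ⟨l, rfl⟩
      have hsplit : ∀ l : Fin 10, (∃ j, FourGame.emb1 j = l) ∨ (∃ j, FourGame.emb2 j = l) := by
        decide
      rcases hsplit l with ⟨j, rfl⟩ | ⟨j, rfl⟩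
      · exact Or.inl ⟨j, rfl⟩
      · exact Or.inr ⟨j, rfl⟩
  · rw [Set.disjoint_left]
    rintro g ⟨j, rfl⟩ ⟨j', hj⟩
    have h12 : ∀ (a b : Fin 5), FourGame.emb2 a ≠ FourGame.emb1 b := by decide
    exact h12 j' j (FourGame.line_inj hj)
  · have hinj : Function.Injective
        (fun j : Fin 5 => (↑(FourGame.lineF (FourGame.emb1 j).val) : Set (Fin 4 × Fin 4))) :=
      fun j j' h => FourGame.emb1_inj (FourGame.line_inj h)
    show (Set.range _).ncard = 5
    rw [← Set.image_univ, Set.ncard_image_of_injective _ hinj, Set.ncard_univ]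
    simp
  · have hinj : Function.Injective
        (fun j : Fin 5 => (↑(FourGame.lineF (FourGame.emb2 j).val) : Set (Fin 4 × Fin 4))) :=
      fun j j' h => FourGame.emb2_inj (FourGame.line_inj h)
    show (Set.range _).ncard = 5
    rw [← Set.image_univ, Set.ncard_image_of_injective _ hinj, Set.ncard_univ]
    simp
  · show (↑FourGame.N1f : Set (Fin 4 × Fin 4)).ncard = 8
    rw [Set.ncard_coe_finset]
    decide
  · show (↑FourGame.N2f : Set (Fin 4 × Fin 4)).ncard = 8
    rw [Set.ncard_coe_finset]
    decide
  · show Disjoint (↑FourGame.N1f : Set (Fin 4 × Fin 4)) ↑FourGame.N2f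
    exact Finset.disjoint_coe.mpr disjoint_compl_right
  · show (↑FourGame.N1f : Set (Fin 4 × Fin 4)) ∪ ↑FourGame.N2f = Set.univ
    rw [← Finset.coe_union]
    show (↑(FourGame.N1f ∪ FourGame.N1fᶜ) : Set (Fin 4 × Fin 4)) = Set.univ
    rw [Finset.union_compl, Finset.coe_univ]
  · intro s hplay hsec g hg
    have hplay' : ∀ m n : ℕ, m < 16 → n < 16 → s m = s n → m = n := fun m n hm hn h =>
      hplay m n (by rw [hcard]; exact hm) (by rw [hcard]; exact hn) h
    have hsec' : ∀ n : ℕ, n % 2 = 1 → n < 16 → s n = FourGame.sigma n (fun i : Fin n => s i.val) :=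
      fun n ho hn => hsec n ho (by rw [hcard]; exact hn)
    obtain ⟨y, hy, n, h1, h2, h3⟩ := FourGame.blocks_lines hplay' hsec' g hg
    exact ⟨y, hy, n, by rw [hcard]; exact h1, h2, h3⟩
  · rintro ⟨τ, hτ, -⟩
    exact FourGame.noLegal τ hτ
  · rintro ⟨σ, hσ, -⟩
    exact FourGame.noLegal σ hσ
end
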